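/- Let V, W ⊆ ℝ^n be open and let Φ : V → W be a C^{1,1} diffeomorphism (a bijection such that Φ and Φ⁻¹ are C¹ with locally Lipschitz derivatives). Let X ⊆ ℝ^n be locally compact and set X̃ := X ∩ V. If X̃ is Clarke regular and prox-regular with respect to the Euclidean metric, then Φ(X̃) is Clarke regular and prox-regular with respect to the Euclidean metric. -/

import Mathlib

open MeasureTheory Filter Topology Set
open scoped RealInnerProductSpace

/-- Euclidean space ℝ^n. -/
abbrev Euc (n : ℕ) := EuclideanSpace ℝ (Fin n)

variable {n : ℕ}

/-- The tangent (contingent) cone of `X` at `x`. -/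
def tanCone (X : Set (Euc n)) (x : Euc n) : Set (Euc n) :=
  {v | ∃ (xk : ℕ → Euc n) (δ : ℕ → ℝ),
    (∀ k, xk k ∈ X) ∧ Tendsto xk atTop (𝓝 x) ∧
    (∀ k, 0 < δ k) ∧ Tendsto δ atTop (𝓝 0) ∧
    Tendsto (fun k => (δ k)⁻¹ • (xk k - x)) atTop (𝓝 v)}

/-- The Clarke tangent cone of `X` at `x` (inner limit of tangent cones). -/
def clarkeCone (X : Set (Euc n)) (x : Euc n) : Set (Euc n) :=
  {v | ∀ yk : ℕ → Euc n, (∀ k, yk k ∈ X) → Tendsto yk atTop (𝓝 x) →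
    ∃ vk : ℕ → Euc n, (∀ k, vk k ∈ tanCone X (yk k)) ∧ Tendsto vk atTop (𝓝 v)}

/-- A set is locally compact if it is the intersection of a closed and an open set. -/
def LocCompactSet (X : Set (Euc n)) : Prop :=
  ∃ C U : Set (Euc n), IsClosed C ∧ IsOpen U ∧ X = C ∩ U

/-- `X` is Clarke regular: locally compact and tangent cone equals Clarke tangent cone. -/
def ClarkeRegular (X : Set (Euc n)) : Prop :=
  LocCompactSet X ∧ ∀ x ∈ X, tanCone X x = clarkeCone X x

/-- A (Riemannian) metric: an inner product `B x` on ℝ^n for every point `x`. -/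
structure VarMetric (n : ℕ) where
  B : Euc n → Euc n →L[ℝ] Euc n →L[ℝ] ℝ
  symm : ∀ x v w, B x v w = B x w v
  posdef : ∀ x v, v ≠ 0 → 0 < B x v v

namespace VarMetric

/-- The norm induced by the metric at `x`. -/
noncomputable def gnorm (g : VarMetric n) (x v : Euc n) : ℝ := Real.sqrt (g.B x v v)

/-- Maximum eigenvalue (max of the `g`-norm over the Euclidean unit sphere). -/
noncomputable def maxEig (g : VarMetric n) (x : Euc n) : ℝ :=
  sSup {r | ∃ v : Euc n, ‖v‖ = 1 ∧ r = g.gnorm x v}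

/-- Minimum eigenvalue (min of the `g`-norm over the Euclidean unit sphere). -/
noncomputable def minEig (g : VarMetric n) (x : Euc n) : ℝ :=
  sInf {r | ∃ v : Euc n, ‖v‖ = 1 ∧ r = g.gnorm x v}

/-- Condition number of the metric at `x`. -/
noncomputable def cond (g : VarMetric n) (x : Euc n) : ℝ := g.maxEig x / g.minEig x

end VarMetric

/-- The projected vector field: `g`-closest points to `f x` in the tangent cone. -/
noncomputable def projVF (X : Set (Euc n)) (g : VarMetric n) (f : Euc n → Euc n)
    (x : Euc n) : Set (Euc n) :=
  {v | v ∈ tanCone X x ∧ ∀ w ∈ tanCone X x, g.gnorm x (v - f x) ≤ g.gnorm x (w - f x)}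

/-- Krasovskii regularization of a set-valued map `F` on `X`. -/
def kras (X : Set (Euc n)) (F : Euc n → Set (Euc n)) (x : Euc n) : Set (Euc n) :=
  closure (convexHull ℝ {v | ∃ (xk : ℕ → Euc n) (vk : ℕ → Euc n),
    (∀ k, xk k ∈ X) ∧ Tendsto xk atTop (𝓝 x) ∧
    (∀ k, vk k ∈ F (xk k)) ∧ Tendsto vk atTop (𝓝 v)})

/-- Carathéodory solution of `ẋ ∈ F(x)`, `x 0 = x₀`, on the interval `I`
(`I = Set.Ico 0 T`, or `Set.Ici 0` for complete solutions). -/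
def IsSolOn (X : Set (Euc n)) (F : Euc n → Set (Euc n)) (x₀ : Euc n)
    (x : ℝ → Euc n) (I : Set ℝ) : Prop :=
  x 0 = x₀ ∧ (∀ t ∈ I, x t ∈ X) ∧
  ∃ v : ℝ → Euc n, LocallyIntegrableOn v I volume ∧
    (∀ t ∈ I, x t = x₀ + ∫ s in (0:ℝ)..t, v s) ∧
    (∀ᵐ t ∂(volume.restrict I), v t ∈ F (x t))

/-- The normal cone of `X` at `x` with respect to the metric `g` (polar of the Clarke cone). -/
def normalCone (X : Set (Euc n)) (g : VarMetric n) (x : Euc n) : Set (Euc n) :=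
  {η | ∀ v ∈ clarkeCone X x, g.B x v η ≤ 0}

/-- The Euclidean normal cone of `X` at `x`. -/
def normalConeE {n : ℕ} (X : Set (Euc n)) (x : Euc n) : Set (Euc n) :=
  {η | ∀ v ∈ clarkeCone X x, ⟪v, η⟫ ≤ 0}

/-- `X` is prox-regular with respect to the Euclidean metric. -/
def ProxRegE {n : ℕ} (X : Set (Euc n)) : Prop :=
  ∀ x ∈ X, ∃ L > (0:ℝ), ∃ W ∈ 𝓝 x, ∀ y ∈ X ∩ W, ∀ z ∈ X ∩ W, ∀ η ∈ normalConeE X y,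
    ⟪η, z - y⟫ ≤ L * ‖η‖ * ‖z - y‖ ^ 2



/-- Pushforward of the tangent cone under a map differentiable at `x`. -/
lemma tan_forward {f : Euc n → Euc n} {f' : Euc n →L[ℝ] Euc n} {x : Euc n}
    (hf : HasFDerivAt f f' x) {S Y : Set (Euc n)} (hSY : ∀ s ∈ S, f s ∈ Y)
    {v : Euc n} (hv : v ∈ tanCone S x) : f' v ∈ tanCone Y (f x) := by
  obtain ⟨xk, δ, hmem, hx, hδpos, hδ0, hlim⟩ := hv
  refine ⟨fun k => f (xk k), δ, fun k => hSY _ (hmem k),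
    (hf.continuousAt.tendsto).comp hx, hδpos, hδ0, ?_⟩
  have hr : (fun k => f (xk k) - f x - f' (xk k - x)) =o[atTop] (fun k => xk k - x) :=
    (hf.isLittleO).comp_tendsto hx
  have hb : ∀ᶠ k in atTop, ‖(δ k)⁻¹ • (xk k - x)‖ < ‖v‖ + 1 :=
    (hlim.norm).eventually_lt_const (by linarith [norm_nonneg v])
  have hz : Tendsto (fun k => (δ k)⁻¹ • (f (xk k) - f x - f' (xk k - x))) atTop (𝓝 0) := by
    rw [NormedAddCommGroup.tendsto_nhds_zero]
    intro ε hε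
    have hvpos : (0:ℝ) < ‖v‖ + 1 := by linarith [norm_nonneg v]
    have hε' : (0:ℝ) < ε / (2 * (‖v‖ + 1)) := by positivity
    filter_upwards [hr.def hε', hb] with k h1 h2
    have hδk := hδpos k
    have : ‖(δ k)⁻¹ • (f (xk k) - f x - f' (xk k - x))‖
        ≤ (ε / (2 * (‖v‖ + 1))) * ‖(δ k)⁻¹ • (xk k - x)‖ := by
      rw [norm_smul, norm_smul]
      rw [← mul_assoc, mul_comm (ε / (2 * (‖v‖ + 1))) ‖(δ k)⁻¹‖, mul_assoc]
      exact mul_le_mul_of_nonneg_left h1 (norm_nonneg _)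
    calc ‖(δ k)⁻¹ • (f (xk k) - f x - f' (xk k - x))‖
        ≤ (ε / (2 * (‖v‖ + 1))) * ‖(δ k)⁻¹ • (xk k - x)‖ := this
      _ ≤ (ε / (2 * (‖v‖ + 1))) * (‖v‖ + 1) := by
          exact mul_le_mul_of_nonneg_left h2.le (le_of_lt hε')
      _ = ε / 2 := by field_simp
      _ < ε := by linarith
  have hmain : Tendsto (fun k => f' ((δ k)⁻¹ • (xk k - x)) +
      (δ k)⁻¹ • (f (xk k) - f x - f' (xk k - x))) atTop (𝓝 (f' v + 0)) :=
    ((f'.continuous.tendsto v).comp hlim).add hz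
  rw [add_zero] at hmain
  convert hmain using 2 with k
  rw [_root_.map_smul, ← smul_add]
  congr 1
  abel

/-- Pushforward of the Clarke cone under a `C¹` map with continuous local inverse. -/
lemma clarke_forward {V : Set (Euc n)} (hV : IsOpen V) {Φ ψ : Euc n → Euc n}
    (hΦ : ContDiffOn ℝ 1 Φ V) {S Y : Set (Euc n)} (hSV : S ⊆ V)
    (hSY : ∀ s ∈ S, Φ s ∈ Y) (hYS : ∀ y ∈ Y, ψ y ∈ S)
    (hψΦ : ∀ y ∈ Y, Φ (ψ y) = y) {x : Euc n} (hx : x ∈ S)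
    (hψc : ContinuousAt ψ (Φ x)) (hψx : ψ (Φ x) = x)
    {v : Euc n} (hv : v ∈ clarkeCone S x) :
    fderiv ℝ Φ x v ∈ clarkeCone Y (Φ x) := by
  intro yk hyk hyklim
  set zk := fun k => ψ (yk k) with hzk
  have hzS : ∀ k, zk k ∈ S := fun k => hYS _ (hyk k)
  have hzlim : Tendsto zk atTop (𝓝 x) := by
    have := hψc.tendsto.comp hyklim; rwa [hψx] at this
  obtain ⟨vk, hvk, hvklim⟩ := hv zk hzS hzlim
  have hdiff : ∀ z ∈ V, HasFDerivAt Φ (fderiv ℝ Φ z) z := fun z hz =>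
    ((hΦ.differentiableOn one_ne_zero).differentiableAt (hV.mem_nhds hz)).hasFDerivAt
  refine ⟨fun k => fderiv ℝ Φ (zk k) (vk k), fun k => ?_, ?_⟩
  · have := tan_forward (hdiff _ (hSV (hzS k))) hSY (hvk k)
    rwa [hψΦ _ (hyk k)] at this
  · have hAcont : ContinuousAt (fderiv ℝ Φ) x :=
      (hΦ.continuousOn_fderiv_of_isOpen hV le_rfl).continuousAt (hV.mem_nhds (hSV hx))
    have hA : Tendsto (fun k => fderiv ℝ Φ (zk k)) atTop (𝓝 (fderiv ℝ Φ x)) :=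
      hAcont.tendsto.comp hzlim
    have happ : Continuous fun p : (Euc n →L[ℝ] Euc n) × Euc n => p.1 p.2 :=
      isBoundedBilinearMap_apply.continuous
    exact (happ.tendsto _).comp (hA.prodMk_nhds hvklim)

/-- Chain rule: the derivative of a left inverse inverts the derivative. -/
lemma comp_fderiv_id {V : Set (Euc n)} (hV : IsOpen V) {Φ ψ : Euc n → Euc n}
    (h : ∀ x ∈ V, ψ (Φ x) = x) {x : Euc n} (hx : x ∈ V)
    (hΦd : DifferentiableAt ℝ Φ x) (hψd : DifferentiableAt ℝ ψ (Φ x)) :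
    (fderiv ℝ ψ (Φ x)).comp (fderiv ℝ Φ x) = ContinuousLinearMap.id ℝ (Euc n) := by
  have hcomp : HasFDerivAt (ψ ∘ Φ) ((fderiv ℝ ψ (Φ x)).comp (fderiv ℝ Φ x)) x :=
    hψd.hasFDerivAt.comp x hΦd.hasFDerivAt
  have heq : (ψ ∘ Φ) =ᶠ[𝓝 x] id :=
    eventually_of_mem (hV.mem_nhds hx) (fun y hy => h y hy)
  have hid : HasFDerivAt (ψ ∘ Φ) (ContinuousLinearMap.id ℝ (Euc n)) x :=
    (hasFDerivAt_id x).congr_of_eventuallyEq heq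
  exact hcomp.unique hid

/-- Quadratic Taylor bound on a convex set with Lipschitz derivative. -/
lemma taylor_bound {K : NNReal} {s : Set (Euc n)} {Φ : Euc n → Euc n} (hs : Convex ℝ s)
    (hd : ∀ w ∈ s, HasFDerivAt Φ (fderiv ℝ Φ w) w)
    (hlip : LipschitzOnWith K (fderiv ℝ Φ) s) {y z : Euc n} (hy : y ∈ s) (hz : z ∈ s) :
    ‖Φ z - Φ y - fderiv ℝ Φ y (z - y)‖ ≤ K * ‖z - y‖ ^ 2 := by
  have hseg : segment ℝ y z ⊆ s := hs.segment_subset hy hz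
  have hys : y ∈ segment ℝ y z := left_mem_segment ℝ y z
  have hzs : z ∈ segment ℝ y z := right_mem_segment ℝ y z
  have key := Convex.norm_image_sub_le_of_norm_hasFDerivWithin_le'
    (f := Φ) (f' := fun w => fderiv ℝ Φ w) (φ := fderiv ℝ Φ y)
    (C := (K : ℝ) * ‖z - y‖) (s := segment ℝ y z)
    (fun w hw => (hd w (hseg hw)).hasFDerivWithinAt)
    (fun w hw => ?_) (convex_segment y z) hys hzs
  · calc ‖Φ z - Φ y - fderiv ℝ Φ y (z - y)‖ ≤ (K : ℝ) * ‖z - y‖ * ‖z - y‖ := key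
      _ = K * ‖z - y‖ ^ 2 := by ring
  · -- ‖fderiv Φ w - fderiv Φ y‖ ≤ K * ‖z - y‖
    have h1 : dist (fderiv ℝ Φ w) (fderiv ℝ Φ y) ≤ K * dist w y :=
      hlip.dist_le_mul w (hseg hw) y (hseg hys)
    have h2 : ‖w - y‖ ≤ ‖z - y‖ := by
      obtain ⟨a, b, ha, hb, hab, rfl⟩ := hw
      have : a • y + b • z - y = b • (z - y) := by
        have : a = 1 - b := by linarith
        rw [this]; module
      rw [this, norm_smul, Real.norm_eq_abs, abs_of_nonneg hb]
      nlinarith [norm_nonneg (z - y)]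
    rw [dist_eq_norm] at h1
    calc ‖fderiv ℝ Φ w - fderiv ℝ Φ y‖ ≤ K * dist w y := h1
      _ ≤ (K : ℝ) * ‖z - y‖ := by
          rw [dist_eq_norm]
          exact mul_le_mul_of_nonneg_left h2 K.2

set_option maxHeartbeats 2000000 in
/-- C^{1,1} diffeomorphisms preserve prox-regularity (Proposition 8.5). -/
theorem stmt_19 {n : ℕ} (V W : Set (Euc n)) (hV : IsOpen V) (hW : IsOpen W)
    (Φ Φinv : Euc n → Euc n)
    (hΦ : ContDiffOn ℝ 1 Φ V) (hΦinv : ContDiffOn ℝ 1 Φinv W)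
    (hΦlip : ∀ x ∈ V, ∃ K : NNReal, ∃ U ∈ 𝓝 x, LipschitzOnWith K (fderiv ℝ Φ) (V ∩ U))
    (hΦinvlip : ∀ y ∈ W, ∃ K : NNReal, ∃ U ∈ 𝓝 y,
      LipschitzOnWith K (fderiv ℝ Φinv) (W ∩ U))
    (hmaps : Set.MapsTo Φ V W) (hmaps' : Set.MapsTo Φinv W V)
    (hleft : ∀ x ∈ V, Φinv (Φ x) = x) (hright : ∀ y ∈ W, Φ (Φinv y) = y)
    (X : Set (Euc n)) (hX : LocCompactSet X)
    (hreg : ClarkeRegular (X ∩ V)) (hprox : ProxRegE (X ∩ V)) :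
    ClarkeRegular (Φ '' (X ∩ V)) ∧ ProxRegE (Φ '' (X ∩ V)) := by

  classical
  set Xt : Set (Euc n) := X ∩ V with hXtdef
  set Yt : Set (Euc n) := Φ '' Xt with hYtdef
  have hXtV : Xt ⊆ V := inter_subset_right
  have hYtW : Yt ⊆ W := by rintro y ⟨x, hx, rfl⟩; exact hmaps hx.2
  have hXtoY : ∀ s ∈ Xt, Φ s ∈ Yt := fun s hs => mem_image_of_mem _ hs
  have hYtoX : ∀ y ∈ Yt, Φinv y ∈ Xt := by
    rintro y ⟨x, hx, rfl⟩; rw [hleft x hx.2]; exact hx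
  have hΦψ : ∀ y ∈ Yt, Φ (Φinv y) = y := fun y hy => hright y (hYtW hy)
  have hψΦ : ∀ s ∈ Xt, Φinv (Φ s) = s := fun s hs => hleft s hs.2
  have hΦd : ∀ x ∈ V, DifferentiableAt ℝ Φ x := fun x hx =>
    (hΦ.differentiableOn one_ne_zero).differentiableAt (hV.mem_nhds hx)
  have hψd : ∀ y ∈ W, DifferentiableAt ℝ Φinv y := fun y hy =>
    (hΦinv.differentiableOn one_ne_zero).differentiableAt (hW.mem_nhds hy)
  have hΦda : ∀ x ∈ V, HasFDerivAt Φ (fderiv ℝ Φ x) x := fun x hx => (hΦd x hx).hasFDerivAt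
  have hψda : ∀ y ∈ W, HasFDerivAt Φinv (fderiv ℝ Φinv y) y := fun y hy =>
    (hψd y hy).hasFDerivAt
  have hψcont : ∀ y ∈ W, ContinuousAt Φinv y := fun y hy =>
    hΦinv.continuousOn.continuousAt (hW.mem_nhds hy)
  have hΦcont : ∀ x ∈ V, ContinuousAt Φ x := fun x hx =>
    hΦ.continuousOn.continuousAt (hV.mem_nhds hx)
  have chain2 : ∀ y ∈ W, (fderiv ℝ Φ (Φinv y)).comp (fderiv ℝ Φinv y)
      = ContinuousLinearMap.id ℝ (Euc n) := fun y hy =>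
    comp_fderiv_id hW hright hy (hψd y hy) (hΦd _ (hmaps' hy))
  -- cone transformation lemmas
  have tfwd : ∀ x ∈ Xt, ∀ v ∈ tanCone Xt x, fderiv ℝ Φ x v ∈ tanCone Yt (Φ x) :=
    fun x hx v hv => tan_forward (hΦda x (hXtV hx)) hXtoY hv
  have tbwd : ∀ x ∈ Xt, ∀ w ∈ tanCone Yt (Φ x), fderiv ℝ Φinv (Φ x) w ∈ tanCone Xt x := by
    intro x hx w hw
    have := tan_forward (hψda _ (hmaps (hXtV hx))) hYtoX hw
    rwa [hψΦ x hx] at this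
  have cfwd : ∀ x ∈ Xt, ∀ v ∈ clarkeCone Xt x, fderiv ℝ Φ x v ∈ clarkeCone Yt (Φ x) :=
    fun x hx v hv => clarke_forward hV hΦ hXtV hXtoY hYtoX hΦψ hx
      (hψcont _ (hmaps (hXtV hx))) (hψΦ x hx) hv
  have cbwd : ∀ x ∈ Xt, ∀ w ∈ clarkeCone Yt (Φ x), fderiv ℝ Φinv (Φ x) w ∈ clarkeCone Xt x := by
    intro x hx w hw
    have hc : ContinuousAt Φ (Φinv (Φ x)) := by
      rw [hψΦ x hx]; exact hΦcont x (hXtV hx)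
    have := clarke_forward hW hΦinv hYtW hYtoX hXtoY hψΦ (hXtoY x hx)
      hc (hΦψ _ (hXtoY x hx)) hw
    rwa [hψΦ x hx] at this
  have apply_inv : ∀ x ∈ Xt, ∀ w : Euc n,
      fderiv ℝ Φ x (fderiv ℝ Φinv (Φ x) w) = w := by
    intro x hx w
    have h := chain2 (Φ x) (hmaps (hXtV hx))
    rw [hψΦ x hx] at h
    have := congrArg (fun T : Euc n →L[ℝ] Euc n => T w) h
    simpa using this
  -- cone equality on the image
  have coneEq : ∀ y ∈ Yt, tanCone Yt y = clarkeCone Yt y := by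
    rintro y ⟨x, hx, rfl⟩
    ext w
    constructor
    · intro hw
      have h1 := tbwd x hx w hw
      rw [hreg.2 x hx] at h1
      have h2 := cfwd x hx _ h1
      rwa [apply_inv x hx w] at h2
    · intro hw
      have h1 := cbwd x hx w hw
      rw [← hreg.2 x hx] at h1
      have h2 := tfwd x hx _ h1
      rwa [apply_inv x hx w] at h2
  -- local compactness of the image
  have hYloc : LocCompactSet Yt := by
    obtain ⟨C, U, hC, hU, hXCU⟩ := hX
    set F : Set (Euc n) := {y | y ∈ W ∧ Φinv y ∈ C} with hFdef
    set O : Set (Euc n) := W ∩ Φinv ⁻¹' (U ∩ V) with hOdef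
    have hOopen : IsOpen O := hΦinv.continuousOn.isOpen_inter_preimage hW (hU.inter hV)
    have hOW : O ⊆ W := inter_subset_left
    have hYeq : Yt = F ∩ O := by
      ext y; constructor
      · rintro ⟨x, hx, rfl⟩
        have hxV : x ∈ V := hx.2
        have hxX : x ∈ X := hx.1
        rw [hXCU] at hxX
        have hWx : Φ x ∈ W := hmaps hxV
        refine ⟨⟨hWx, ?_⟩, hWx, ?_⟩
        · show Φinv (Φ x) ∈ C
          rw [hleft x hxV]; exact hxX.1
        · rw [mem_preimage, hleft x hxV]; exact ⟨hxX.2, hxV⟩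
      · rintro ⟨⟨hyW, hyC⟩, -, hyUV⟩
        rw [mem_preimage] at hyUV
        refine ⟨Φinv y, ⟨?_, hyUV.2⟩, hright y hyW⟩
        rw [hXCU]; exact ⟨hyC, hyUV.1⟩
    have hFW : closure F ∩ W ⊆ F := by
      rintro y ⟨hyc, hyW⟩
      refine ⟨hyW, ?_⟩
      have hcont : ContinuousWithinAt Φinv F y := (hψcont y hyW).continuousWithinAt
      have hmemc := hcont.mem_closure_image hyc
      have himg : Φinv '' F ⊆ C := by rintro - ⟨w, hw, rfl⟩; exact hw.2
      have : Φinv y ∈ closure C := closure_mono himg hmemc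
      rwa [hC.closure_eq] at this
    refine ⟨closure F, O, isClosed_closure, hOopen, ?_⟩
    apply Subset.antisymm
    · rw [hYeq]; exact inter_subset_inter subset_closure (Subset.refl _)
    · intro y hy
      rw [hYeq]
      exact ⟨hFW ⟨hy.1, hOW hy.2⟩, hy.2⟩
  -- normal cone pullback
  have npull : ∀ x ∈ Xt, ∀ η ∈ normalConeE Yt (Φ x),
      ContinuousLinearMap.adjoint (fderiv ℝ Φ x) η ∈ normalConeE Xt x := by
    intro x hx η hη v hv
    have h2 := hη _ (cfwd x hx v hv)
    rw [ContinuousLinearMap.adjoint_inner_right]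
    exact h2
  refine ⟨⟨hYloc, coneEq⟩, ?_⟩
  -- prox-regularity of the image
  rintro yb hybY
  obtain ⟨xb, hxb, rfl⟩ := hybY
  have hxbV : xb ∈ V := hxb.2
  have hybW : Φ xb ∈ W := hmaps hxbV
  obtain ⟨L, hL, W', hW', hproxP⟩ := hprox xb hxb
  obtain ⟨K, UK, hUK, hKlip⟩ := hΦlip xb hxbV
  have hnhds : V ∩ UK ∩ W' ∈ 𝓝 xb := inter_mem (inter_mem (hV.mem_nhds hxbV) hUK) hW'
  obtain ⟨r, hr, hball⟩ := Metric.nhds_basis_closedBall.mem_iff.1 hnhds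
  set M : ℝ := ‖fderiv ℝ Φ xb‖ + K * r with hMdef
  have hMnn : 0 ≤ M := by positivity
  have hAbound : ∀ z ∈ Metric.closedBall xb r, ‖fderiv ℝ Φ z‖ ≤ M := by
    intro z hz
    have hzVU : z ∈ V ∩ UK := (hball hz).1
    have hxbVU : xb ∈ V ∩ UK := (hball (Metric.mem_closedBall_self hr.le)).1
    have hd1 := hKlip.dist_le_mul z hzVU xb hxbVU
    rw [dist_eq_norm, dist_eq_norm] at hd1
    have hd2 : ‖z - xb‖ ≤ r := by rwa [← dist_eq_norm, ← Metric.mem_closedBall]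
    have hd3 : ‖fderiv ℝ Φ z‖ - ‖fderiv ℝ Φ xb‖ ≤ ‖fderiv ℝ Φ z - fderiv ℝ Φ xb‖ :=
      norm_sub_norm_le _ _
    have hd4 : (K : ℝ) * ‖z - xb‖ ≤ (K : ℝ) * r := mul_le_mul_of_nonneg_left hd2 K.2
    rw [hMdef]; linarith
  set M' : ℝ := ‖fderiv ℝ Φinv (Φ xb)‖ + 1 with hM'def
  have hM'pos : (0:ℝ) < M' := by positivity
  have hcontA' : ContinuousAt (fderiv ℝ Φinv) (Φ xb) :=
    (hΦinv.continuousOn_fderiv_of_isOpen hW le_rfl).continuousAt (hW.mem_nhds hybW)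
  have hev : ∀ᶠ w in 𝓝 (Φ xb), ‖fderiv ℝ Φinv w‖ < M' := by
    have ht : Tendsto (fun w => ‖fderiv ℝ Φinv w‖) (𝓝 (Φ xb))
        (𝓝 ‖fderiv ℝ Φinv (Φ xb)‖) := (continuous_norm.tendsto _).comp hcontA'
    exact ht.eventually_lt_const (by rw [hM'def]; linarith)
  have hpre : Φinv ⁻¹' (Metric.closedBall xb r) ∈ 𝓝 (Φ xb) := by
    apply (hψcont _ hybW).preimage_mem_nhds
    rw [hleft xb hxbV]
    exact Metric.closedBall_mem_nhds _ hr
  obtain ⟨ρ, hρ, hρball⟩ := Metric.nhds_basis_closedBall.mem_iff.1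
    (inter_mem (inter_mem (hW.mem_nhds hybW) hev) hpre)
  have hψlip : ∀ y ∈ Metric.closedBall (Φ xb) ρ, ∀ z ∈ Metric.closedBall (Φ xb) ρ,
      ‖Φinv z - Φinv y‖ ≤ M' * ‖z - y‖ := by
    intro y hy z hz
    exact Convex.norm_image_sub_le_of_norm_fderiv_le
      (fun w hw => hψd w (hρball hw).1.1)
      (fun w hw => le_of_lt (hρball hw).1.2) (convex_closedBall _ _) hy hz
  refine ⟨L * M * M' ^ 2 + K * M' ^ 2 + 1, by positivity, Metric.closedBall (Φ xb) ρ,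
    Metric.closedBall_mem_nhds _ hρ, ?_⟩
  rintro y ⟨hyY, hyB⟩ z ⟨hzY, hzB⟩ η hη
  set y' : Euc n := Φinv y with hy'def
  set z' : Euc n := Φinv z with hz'def
  have hy'X : y' ∈ Xt := hYtoX y hyY
  have hz'X : z' ∈ Xt := hYtoX z hzY
  have hy'B : y' ∈ Metric.closedBall xb r := (hρball hyB).2
  have hz'B : z' ∈ Metric.closedBall xb r := (hρball hzB).2
  have hy'W' : y' ∈ W' := (hball hy'B).2
  have hz'W' : z' ∈ W' := (hball hz'B).2
  have hyΦ : Φ y' = y := hΦψ y hyY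
  have hzΦ : Φ z' = z := hΦψ z hzY
  set A : Euc n →L[ℝ] Euc n := fderiv ℝ Φ y' with hAdef
  set η' : Euc n := ContinuousLinearMap.adjoint A η with hη'def
  have hη' : η' ∈ normalConeE Xt y' := by
    apply npull y' hy'X
    rw [hyΦ]; exact hη
  have hsegd : ∀ w ∈ Metric.closedBall xb r, HasFDerivAt Φ (fderiv ℝ Φ w) w :=
    fun w hw => hΦda w (hball hw).1.1
  have htay : ‖Φ z' - Φ y' - A (z' - y')‖ ≤ (K : ℝ) * ‖z' - y'‖ ^ 2 :=
    taylor_bound (convex_closedBall _ _) hsegd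
      (hKlip.mono fun w hw => (hball hw).1) hy'B hz'B
  have hnormzy : ‖z' - y'‖ ≤ M' * ‖z - y‖ := hψlip y hyB z hzB
  have hAle : ‖A‖ ≤ M := hAbound y' hy'B
  have hprox1 := hproxP y' ⟨hy'X, hy'W'⟩ z' ⟨hz'X, hz'W'⟩ η' hη'
  have hzy : z - y = A (z' - y') + (Φ z' - Φ y' - A (z' - y')) := by
    rw [← hyΦ, ← hzΦ]; abel
  have hadj : ‖η'‖ ≤ M * ‖η‖ := by
    calc ‖η'‖ ≤ ‖ContinuousLinearMap.adjoint A‖ * ‖η‖ :=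
          ContinuousLinearMap.le_opNorm _ η
      _ = ‖A‖ * ‖η‖ := by rw [ContinuousLinearMap.adjoint.norm_map]
      _ ≤ M * ‖η‖ := mul_le_mul_of_nonneg_right hAle (norm_nonneg η)
  have hsq : ‖z' - y'‖ ^ 2 ≤ M' ^ 2 * ‖z - y‖ ^ 2 := by
    nlinarith [norm_nonneg (z' - y'), norm_nonneg (z - y), hnormzy, hM'pos]
  calc ⟪η, z - y⟫ = ⟪η, A (z' - y')⟫ + ⟪η, Φ z' - Φ y' - A (z' - y')⟫ := by
        rw [hzy, inner_add_right]
    _ ≤ L * ‖η'‖ * ‖z' - y'‖ ^ 2 + ‖η‖ * ((K : ℝ) * ‖z' - y'‖ ^ 2) := by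
        apply add_le_add
        · have heq : ⟪η, A (z' - y')⟫ = ⟪η', z' - y'⟫ :=
            (ContinuousLinearMap.adjoint_inner_left A (z' - y') η).symm
          rw [heq]; exact hprox1
        · calc ⟪η, Φ z' - Φ y' - A (z' - y')⟫
              ≤ ‖η‖ * ‖Φ z' - Φ y' - A (z' - y')‖ := real_inner_le_norm _ _
            _ ≤ ‖η‖ * ((K : ℝ) * ‖z' - y'‖ ^ 2) :=
                mul_le_mul_of_nonneg_left htay (norm_nonneg η)
    _ ≤ (L * M * M' ^ 2 + K * M' ^ 2 + 1) * ‖η‖ * ‖z - y‖ ^ 2 := by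
        have e1 : L * ‖η'‖ * ‖z' - y'‖ ^ 2 ≤ L * (M * ‖η‖) * (M' ^ 2 * ‖z - y‖ ^ 2) := by
          apply mul_le_mul
          · exact mul_le_mul_of_nonneg_left hadj hL.le
          · exact hsq
          · positivity
          · exact mul_nonneg hL.le (mul_nonneg hMnn (norm_nonneg η))
        have e2 : ‖η‖ * ((K : ℝ) * ‖z' - y'‖ ^ 2)
            ≤ ‖η‖ * ((K : ℝ) * (M' ^ 2 * ‖z - y‖ ^ 2)) := by
          apply mul_le_mul_of_nonneg_left _ (norm_nonneg η)
          exact mul_le_mul_of_nonneg_left hsq K.2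
        have e3 : (0:ℝ) ≤ ‖η‖ * ‖z - y‖ ^ 2 := by positivity
        nlinarith [e1, e2, e3]
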